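/- arXiv:2106.00485 — 2 statements merged into one kernel-verified Lean document; each statement's English description precedes it below -/
import Mathlib

section
/- Let H be a real Hilbert space and a : H × H → ℝ a bilinear form. Suppose there exist constants c₁ ≥ 0 and c* > 0 such that for all u ∈ H, a(u,u) ≥ c*‖u‖², and suppose s : H → ℝ is a seminorm such that for every u ∈ H and every θ ∈ (0,1) there exists w ∈ H with ‖w‖ = 1 and a(u,w) ≥ -c₁‖u‖ + θ·s(u). Then for every nonzero u ∈ H, sup over nonzero v ∈ H of a(u,v)/‖v‖ ≥ (c*/(c₁+1+c*))·(‖u‖ + s(u)). -/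
/-!
Testing with `v = u + α w`, where `‖w‖ = 1` realises the lower bound `a u w ≥ -c₁‖u‖ + θ s u`
and `α = c*‖u‖/(c₁+1)`, the coercivity term `c*‖u‖²` exactly absorbs `-α c₁‖u‖`, leaving
`a u v ≥ α (‖u‖ + θ s u)` while `‖v‖ ≤ ‖u‖ + α`. Dividing gives the bound with `θ s u` in place
of `s u`, and `θ → 1` finishes.
-/

open Filter Topology Set

section InfSup

variable {E : Type*} [NormedAddCommGroup E] [NormedSpace ℝ E] (a : E →ₗ[ℝ] E →ₗ[ℝ] ℝ)

lemma apply_le_mul_norm_of_forall_div_norm_le {u : E} {r : ℝ}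
    (hr : ∀ v : E, v ≠ 0 → a u v / ‖v‖ ≤ r) (v : E) : a u v ≤ r * ‖v‖ := by
  rcases eq_or_ne v 0 with rfl | hv
  · simp
  · exact (div_le_iff₀ (norm_pos_iff.mpr hv)).mp (hr v hv)

lemma mul_norm_add_le_of_apply_le {u w : E} {c₁ cstar t r : ℝ} (hu : u ≠ 0)
    (hc₁ : 0 < c₁ + 1) (hcstar : 0 ≤ cstar) (hcoer : cstar * ‖u‖ ^ 2 ≤ a u u)
    (hw : ‖w‖ ≤ 1) (hauw : -c₁ * ‖u‖ + t ≤ a u w) (hr : ∀ v : E, a u v ≤ r * ‖v‖) :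
    cstar * (‖u‖ + t) ≤ r * (c₁ + 1 + cstar) := by
  have hnu : 0 < ‖u‖ := norm_pos_iff.mpr hu
  have hr₀ : 0 ≤ r := by nlinarith [hr u]
  set α := cstar * ‖u‖ / (c₁ + 1)
  have hα : 0 ≤ α := by positivity
  have hαc : α * (c₁ + 1) = cstar * ‖u‖ := div_mul_cancel₀ _ hc₁.ne'
  have lower : α * (‖u‖ + t) ≤ a u (u + α • w) := by
    simp only [map_add, map_smul, smul_eq_mul]
    nlinarith [mul_le_mul_of_nonneg_left hauw hα]
  have upper : ‖u + α • w‖ ≤ ‖u‖ + α :=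
    (norm_add_le _ _).trans (add_le_add_right (by
      rw [norm_smul, Real.norm_of_nonneg hα]
      exact mul_le_of_le_one_right hα hw) _)
  have key : α * (‖u‖ + t) ≤ r * (‖u‖ + α) :=
    lower.trans ((hr _).trans (mul_le_mul_of_nonneg_left upper hr₀))
  have scaled : ‖u‖ * (cstar * (‖u‖ + t)) ≤ ‖u‖ * (r * (c₁ + 1 + cstar)) :=
    calc ‖u‖ * (cstar * (‖u‖ + t)) = (c₁ + 1) * (α * (‖u‖ + t)) := by
          linear_combination -(‖u‖ + t) * hαc
      _ ≤ (c₁ + 1) * (r * (‖u‖ + α)) := mul_le_mul_of_nonneg_left key hc₁.le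
      _ = ‖u‖ * (r * (c₁ + 1 + cstar)) := by linear_combination r * hαc
  exact le_of_mul_le_mul_left scaled hnu

end InfSup

theorem stmt_0_general {H : Type*} [NormedAddCommGroup H] [InnerProductSpace ℝ H]
    (a : H →ₗ[ℝ] H →ₗ[ℝ] ℝ) (c₁ cstar : ℝ) (hc₁ : 0 ≤ c₁) (hcstar : 0 < cstar)
    (hcoer : ∀ u : H, cstar * ‖u‖ ^ 2 ≤ a u u)
    (s : Seminorm ℝ H)
    (hw : ∀ u : H, ∀ θ ∈ Set.Ioo (0 : ℝ) 1,
      ∃ w : H, ‖w‖ = 1 ∧ -c₁ * ‖u‖ + θ * s u ≤ a u w) :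
    ∀ u : H, u ≠ 0 → ∀ r : ℝ, (∀ v : H, v ≠ 0 → a u v / ‖v‖ ≤ r) →
      (cstar / (c₁ + 1 + cstar)) * (‖u‖ + s u) ≤ r := by
  intro u hu r hr
  have bound : ∀ θ ∈ Ioo (0 : ℝ) 1, cstar * (‖u‖ + θ * s u) ≤ r * (c₁ + 1 + cstar) := by
    intro θ hθ
    obtain ⟨w, hw₁, hauw⟩ := hw u θ hθ
    exact mul_norm_add_le_of_apply_le a hu (by linarith) hcstar.le (hcoer u) hw₁.le hauw
      (apply_le_mul_norm_of_forall_div_norm_le a hr)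
  have hlim : Tendsto (fun θ : ℝ => cstar * (‖u‖ + θ * s u)) (𝓝[<] 1)
      (𝓝 (cstar * (‖u‖ + s u))) := by
    have : Continuous fun θ : ℝ => cstar * (‖u‖ + θ * s u) := by fun_prop
    simpa using (this.tendsto 1).mono_left nhdsWithin_le_nhds
  have limit := le_of_tendsto hlim (eventually_of_mem (Ioo_mem_nhdsLT one_pos) bound)
  rw [div_mul_eq_mul_div, div_le_iff₀ (by linarith)]
  exact limit

/-- abstract inf-sup theorem. The supremum over nonzero `v` of
`a u v / ‖v‖` being `≥ C (‖u‖ + s u)` is rendered as: every upper bound of the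
set of Rayleigh quotients is `≥ C (‖u‖ + s u)`. -/
theorem stmt_0 {H : Type*} [NormedAddCommGroup H] [InnerProductSpace ℝ H] [CompleteSpace H]
    (a : H →ₗ[ℝ] H →ₗ[ℝ] ℝ) (c₁ cstar : ℝ) (hc₁ : 0 ≤ c₁) (hcstar : 0 < cstar)
    (hcoer : ∀ u : H, cstar * ‖u‖ ^ 2 ≤ a u u)
    (s : Seminorm ℝ H)
    (hw : ∀ u : H, ∀ θ ∈ Set.Ioo (0 : ℝ) 1,
      ∃ w : H, ‖w‖ = 1 ∧ -c₁ * ‖u‖ + θ * s u ≤ a u w) :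
    ∀ u : H, u ≠ 0 → ∀ r : ℝ, (∀ v : H, v ≠ 0 → a u v / ‖v‖ ≤ r) →
      (cstar / (c₁ + 1 + cstar)) * (‖u‖ + s u) ≤ r :=
  stmt_0_general a c₁ cstar hc₁ hcstar hcoer s hw
end

section
/- Let H be a real Hilbert space with norm ‖·‖, let a : H × H → ℝ be bilinear and bounded with constant c₁, coercive with constant c* > 0, and let s be a seminorm on H. Fix u ∈ H and θ ∈ (0,1), and suppose w ∈ H satisfies ‖w‖ = 1 and a(u,w) ≥ -c₁‖u‖ + θ s(u). Set α = c*‖u‖/(c₁+1) and v = u + αw. Then a(u,v) ≥ (c₁+1)^{-1} c* (‖u‖ + θ s(u)) ‖u‖ and ‖v‖ ≤ (c₁+1)^{-1}(c₁ + 1 + c*)‖u‖. -/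
/-! Testing with `v = u + α w` adds the coercivity bound `a(u,u) ≥ c*‖u‖²` to `α` times the
assumed bound on `a(u,w)`; for `α = c*‖u‖/(c₁+1)` the term `-α c₁‖u‖` and the share
`c*‖u‖²/(c₁+1)` of the first bound cancel exactly against `c*‖u‖²`, leaving
`(c₁+1)⁻¹ c* (‖u‖ + θ s(u)) ‖u‖`. Since `‖w‖ = 1`, the triangle inequality gives
`‖v‖ ≤ ‖u‖ + α`. -/

theorem LinearMap.add_smul_le_apply_add_smul {E : Type*} [AddCommGroup E] [Module ℝ E]
    (a : E →ₗ[ℝ] E →ₗ[ℝ] ℝ) {u w : E} {r m α : ℝ} (hα : 0 ≤ α)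
    (huu : r ≤ a u u) (huw : m ≤ a u w) :
    r + α * m ≤ a u (u + α • w) := by
  rw [map_add, map_smul, smul_eq_mul]
  exact add_le_add huu (mul_le_mul_of_nonneg_left huw hα)

theorem norm_add_smul_le_of_norm_eq_one {E : Type*} [SeminormedAddCommGroup E]
    [NormedSpace ℝ E] {u w : E} {α : ℝ} (hα : 0 ≤ α) (hw : ‖w‖ = 1) :
    ‖u + α • w‖ ≤ ‖u‖ + α := by
  calc ‖u + α • w‖ ≤ ‖u‖ + ‖α • w‖ := norm_add_le _ _
    _ = ‖u‖ + α := by rw [norm_smul, hw, Real.norm_of_nonneg hα, mul_one]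

theorem stmt_14_general {H : Type*} [NormedAddCommGroup H] [InnerProductSpace ℝ H]
    (a : H →ₗ[ℝ] H →ₗ[ℝ] ℝ) (c₁ cstar : ℝ) (hc₁ : 0 ≤ c₁) (hcstar : 0 < cstar)
    (hcoer : ∀ x : H, cstar * ‖x‖ ^ 2 ≤ a x x)
    (s : Seminorm ℝ H)
    (u : H) (θ : ℝ)
    (w : H) (hw1 : ‖w‖ = 1) (hw2 : -c₁ * ‖u‖ + θ * s u ≤ a u w)
    (α : ℝ) (hα : α = cstar * ‖u‖ / (c₁ + 1))
    (v : H) (hv : v = u + α • w) :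
    (c₁ + 1)⁻¹ * cstar * (‖u‖ + θ * s u) * ‖u‖ ≤ a u v ∧
      ‖v‖ ≤ (c₁ + 1)⁻¹ * (c₁ + 1 + cstar) * ‖u‖ := by
  have hc₁1 : c₁ + 1 ≠ 0 := by positivity
  have hα0 : 0 ≤ α := hα ▸ by positivity
  subst hv
  constructor
  · have hcancel : (c₁ + 1)⁻¹ * cstar * (‖u‖ + θ * s u) * ‖u‖
        = cstar * ‖u‖ ^ 2 + α * (-c₁ * ‖u‖ + θ * s u) := by
      rw [hα]
      field_simp
      ring
    exact hcancel ▸ a.add_smul_le_apply_add_smul hα0 (hcoer u) hw2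
  · have hsum : (c₁ + 1)⁻¹ * (c₁ + 1 + cstar) * ‖u‖ = ‖u‖ + α := by
      rw [hα]
      field_simp
    exact hsum ▸ norm_add_smul_le_of_norm_eq_one hα0 hw1

/-- the quantitative test-function construction in the inf-sup
proof: with `α = c*‖u‖/(c₁+1)` and `v = u + α w`, one has
`a(u,v) ≥ (c₁+1)⁻¹ c* (‖u‖ + θ s(u)) ‖u‖` and `‖v‖ ≤ (c₁+1)⁻¹ (c₁+1+c*) ‖u‖`. -/
theorem stmt_14 {H : Type*} [NormedAddCommGroup H] [InnerProductSpace ℝ H] [CompleteSpace H]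
    (a : H →ₗ[ℝ] H →ₗ[ℝ] ℝ) (c₁ cstar : ℝ) (hc₁ : 0 ≤ c₁) (hcstar : 0 < cstar)
    (hbdd : ∀ x y : H, |a x y| ≤ c₁ * ‖x‖ * ‖y‖)
    (hcoer : ∀ x : H, cstar * ‖x‖ ^ 2 ≤ a x x)
    (s : Seminorm ℝ H)
    (u : H) (θ : ℝ) (hθ : θ ∈ Set.Ioo (0 : ℝ) 1)
    (w : H) (hw1 : ‖w‖ = 1) (hw2 : -c₁ * ‖u‖ + θ * s u ≤ a u w)
    (α : ℝ) (hα : α = cstar * ‖u‖ / (c₁ + 1))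
    (v : H) (hv : v = u + α • w) :
    (c₁ + 1)⁻¹ * cstar * (‖u‖ + θ * s u) * ‖u‖ ≤ a u v ∧
      ‖v‖ ≤ (c₁ + 1)⁻¹ * (c₁ + 1 + cstar) * ‖u‖ :=
  stmt_14_general a c₁ cstar hc₁ hcstar hcoer s u θ w hw1 hw2 α hα v hv
end
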